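/- arXiv:1201.0557 — 6 statements merged into one kernel-verified Lean document; each statement's English description precedes it below -/
import Mathlib

section
/- If C is an absorbing subalgebra of B and B is an absorbing subalgebra of A, then C is an absorbing subalgebra of A. Specifically, if B absorbs A with respect to a term t of arity m and C absorbs B with respect to a term s of arity n, then C absorbs A with respect to the mn-ary star composition s*t. -/
structure Signature : Type 1 where
  symbols : Type
  arity : symbols → ℕ

structure UAlgebra (σ : Signature) : Type 1 where
  carrier : Type
  op : ∀ s : σ.symbols, (Fin (σ.arity s) → carrier) → carrier

inductive Term (σ : Signature) (n : ℕ) : Type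
  | var : Fin n → Term σ n
  | app (s : σ.symbols) : (Fin (σ.arity s) → Term σ n) → Term σ n

def Term.eval {σ : Signature} (A : UAlgebra σ) {n : ℕ} :
    Term σ n → (Fin n → A.carrier) → A.carrier
  | .var i, x => x i
  | .app s ts, x => A.op s fun j => Term.eval A (ts j) x

/-- `B` is a subuniverse of the algebra `A`. -/
def Subuniverse {σ : Signature} (A : UAlgebra σ) (B : Set A.carrier) : Prop :=
  ∀ (s : σ.symbols) (a : Fin (σ.arity s) → A.carrier), (∀ i, a i ∈ B) → A.op s a ∈ B

/-- `B` absorbs `A` with respect to the term `t`. -/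
def AbsorbsWith {σ : Signature} (A : UAlgebra σ) (B : Set A.carrier) {n : ℕ} (t : Term σ n) : Prop :=
  ∀ (k : Fin n) (a : Fin n → A.carrier), (∀ i, i ≠ k → a i ∈ B) → t.eval A a ∈ B

/-- `C` absorbs the subalgebra with universe `B` (inside the ambient algebra `A`)
with respect to the term `t`. -/
def AbsorbsWithIn {σ : Signature} (A : UAlgebra σ) (B C : Set A.carrier) {n : ℕ}
    (t : Term σ n) : Prop :=
  ∀ (k : Fin n) (a : Fin n → A.carrier), (∀ i, a i ∈ B) → (∀ i, i ≠ k → a i ∈ C) →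
    t.eval A a ∈ C

/-- `B` is an absorbing subalgebra (subuniverse) of `A`. -/
def Absorbing {σ : Signature} (A : UAlgebra σ) (B : Set A.carrier) : Prop :=
  Subuniverse A B ∧ ∃ (n : ℕ) (t : Term σ n), AbsorbsWith A B t

/-- `B` is a proper absorbing subalgebra of `A`: `∅ ≠ B ≠ A`. -/
def ProperAbsorbing {σ : Signature} (A : UAlgebra σ) (B : Set A.carrier) : Prop :=
  Absorbing A B ∧ B.Nonempty ∧ B ≠ Set.univ

/-- `C` is a minimal absorbing subalgebra of `A`. -/
def MinAbsorbing {σ : Signature} (A : UAlgebra σ) (C : Set A.carrier) : Prop :=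
  Absorbing A C ∧ C.Nonempty ∧ ∀ C' ⊆ C, Absorbing A C' → C'.Nonempty → C' = C

/-- All (basic, equivalently term) operations of `A` are idempotent. -/
def Idempotent {σ : Signature} (A : UAlgebra σ) : Prop :=
  ∀ (s : σ.symbols) (a : A.carrier), A.op s (fun _ => a) = a

/-- `t` is a Taylor term of the algebra `A`. -/
def IsTaylorTerm {σ : Signature} (A : UAlgebra σ) {k : ℕ} (t : Term σ k) : Prop :=
  (∀ a : A.carrier, t.eval A (fun _ => a) = a) ∧
  ∀ j : Fin k, ∃ u v : Fin k → Fin 2, u j = 0 ∧ v j = 1 ∧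
    ∀ x : Fin 2 → A.carrier, t.eval A (fun i => x (u i)) = t.eval A (fun i => x (v i))

/-- The product of two algebras of the same signature. -/
def UAlgebra.prod {σ : Signature} (A B : UAlgebra σ) : UAlgebra σ where
  carrier := A.carrier × B.carrier
  op s x := (A.op s fun i => (x i).1, B.op s fun i => (x i).2)

/-- The `k`-th power of an algebra. -/
def UAlgebra.pow {σ : Signature} (A : UAlgebra σ) (k : ℕ) : UAlgebra σ where
  carrier := Fin k → A.carrier
  op s x := fun j => A.op s fun i => x i j

/-- `R ⊆ A × B` is subdirect: both projections are onto. -/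
def Subdirect2 {α β : Type} (R : Set (α × β)) : Prop :=
  (∀ a, ∃ b, (a, b) ∈ R) ∧ ∀ b, ∃ a, (a, b) ∈ R

/-- `a` and `a'` are linked in `R` (connected in the bipartite graph of `R`). -/
def LinkedPair {α β : Type} (R : Set (α × β)) (a a' : α) : Prop :=
  Relation.ReflTransGen (fun x y => ∃ b, (x, b) ∈ R ∧ (y, b) ∈ R) a a'

/-- `R` is linked: any two elements of the projection of `R` to the first
coordinate are `R`-linked. -/
def IsLinked {α β : Type} (R : Set (α × β)) : Prop :=
  ∀ a a', (∃ b, (a, b) ∈ R) → (∃ b, (a', b) ∈ R) → LinkedPair R a a'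

/-- Cyclic shift of a `k`-tuple. -/
def cycShift {α : Type} {k : ℕ} (x : Fin k → α) : Fin k → α := fun i =>
  x ⟨(i.val + 1) % k, Nat.mod_lt _ (Nat.lt_of_le_of_lt (Nat.zero_le _) i.isLt)⟩

/-- `t` is a cyclic term of `A`: idempotent and invariant under cyclic shift. -/
def IsCyclicTerm {σ : Signature} (A : UAlgebra σ) {k : ℕ} (t : Term σ k) : Prop :=
  (∀ a : A.carrier, t.eval A (fun _ => a) = a) ∧
  ∀ x : Fin k → A.carrier, t.eval A x = t.eval A (cycShift x)


def Term.rename {σ : Signature} {n m : ℕ} (f : Fin n → Fin m) : Term σ n → Term σ m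
  | .var i => .var (f i)
  | .app s ts => .app s fun j => (ts j).rename f

def Term.subst {σ : Signature} {n m : ℕ} (f : Fin n → Term σ m) : Term σ n → Term σ m
  | .var i => f i
  | .app s ts => .app s fun j => (ts j).subst f

/-- The star composition `t₁ * t₂`: apply `t₂` to consecutive blocks of `l`
variables and then `t₁` to the `k` results. -/
def Term.star {σ : Signature} {k l : ℕ} (t₁ : Term σ k) (t₂ : Term σ l) : Term σ (k * l) :=
  t₁.subst fun i => t₂.rename fun j =>
    ⟨i.val * l + j.val, by
      have hj : j.val < l := j.isLt
      have hi : i.val + 1 ≤ k := i.isLt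
      calc i.val * l + j.val < i.val * l + l := by omega
        _ = (i.val + 1) * l := (Nat.succ_mul _ _).symm
        _ ≤ k * l := Nat.mul_le_mul_right l hi⟩

theorem Term.eval_rename {σ : Signature} (A : UAlgebra σ) {n m : ℕ} (f : Fin n → Fin m)
    (t : Term σ n) (x : Fin m → A.carrier) :
    (t.rename f).eval A x = t.eval A (fun i => x (f i)) := by
  induction t with
  | var i => rfl
  | app s ts ih => simp only [Term.rename, Term.eval, ih]

theorem Term.eval_subst {σ : Signature} (A : UAlgebra σ) {n m : ℕ} (f : Fin n → Term σ m)
    (t : Term σ n) (x : Fin m → A.carrier) :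
    (t.subst f).eval A x = t.eval A (fun i => (f i).eval A x) := by
  induction t with
  | var i => rfl
  | app s ts ih => simp only [Term.subst, Term.eval, ih]

theorem eval_mem {σ : Signature} (A : UAlgebra σ) {B : Set A.carrier} (hB : Subuniverse A B)
    {n : ℕ} (t : Term σ n) (a : Fin n → A.carrier) (ha : ∀ i, a i ∈ B) :
    t.eval A a ∈ B := by
  induction t with
  | var i => exact ha i
  | app s ts ih => exact hB s _ fun j => ih j

/-- Transitivity of absorption: if `B` absorbs `A` with respect to
an `m`-ary term `t` and `C` absorbs `B` with respect to an `n`-ary term `s`, then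
`C` is an absorbing subalgebra of `A`; specifically, `C` absorbs `A` with respect
to the `n*m`-ary star composition `s * t`. -/
theorem absorption_trans {σ : Signature} (A : UAlgebra σ) (B C : Set A.carrier)
    {m n : ℕ} (t : Term σ m) (s : Term σ n)
    (hB : Subuniverse A B) (hC : Subuniverse A C) (hCB : C ⊆ B)
    (htabs : AbsorbsWith A B t) (hsabs : AbsorbsWithIn A B C s) :
    Absorbing A C ∧ AbsorbsWith A C (Term.star s t) := by
  have key : AbsorbsWith A C (Term.star s t) := by
    intro k a ha
    rw [Term.star, Term.eval_subst]
    have hm : 0 < m := Nat.pos_of_ne_zero fun h => by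
      subst h; exact absurd k.isLt (by simp)
    have hdiv : ∀ (i : Fin n) (j : Fin m), (i.val * m + j.val) / m = i.val := fun i j => by
      rw [Nat.mul_comm, Nat.mul_add_div hm, Nat.div_eq_of_lt j.isLt, Nat.add_zero]
    have hi0lt : k.val / m < n :=
      Nat.div_lt_of_lt_mul (Nat.lt_of_lt_of_eq k.isLt (Nat.mul_comm n m))
    have hCeval : ∀ i : Fin n, i.val ≠ k.val / m →
        (t.eval A fun j : Fin m => a ⟨i.val * m + j.val, by
          have hj : j.val < m := j.isLt
          have hi : i.val + 1 ≤ n := i.isLt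
          calc i.val * m + j.val < i.val * m + m := by omega
            _ = (i.val + 1) * m := (Nat.succ_mul _ _).symm
            _ ≤ n * m := Nat.mul_le_mul_right m hi⟩) ∈ C := by
      intro i hi
      apply eval_mem A hC
      intro j
      apply ha
      intro hcontra
      apply hi
      have heq : i.val * m + j.val = k.val := congrArg Fin.val hcontra
      rw [← heq, hdiv]
    apply hsabs ⟨k.val / m, hi0lt⟩
    · intro i
      rw [Term.eval_rename]
      by_cases hi : i.val = k.val / m
      · apply htabs ⟨k.val % m, Nat.mod_lt _ hm⟩
        intro j hj
        apply hCB
        apply ha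
        intro hcontra
        apply hj
        have heq : i.val * m + j.val = k.val := congrArg Fin.val hcontra
        have hdm := Nat.div_add_mod k.val m
        rw [Nat.mul_comm] at hdm
        rw [hi] at heq
        exact Fin.ext (show j.val = k.val % m by omega)
      · exact hCB (hCeval i hi)
    · intro i hi
      rw [Term.eval_rename]
      exact hCeval i (fun h => hi (Fin.ext h))
  exact ⟨⟨hC, _, _, key⟩, key⟩
end

section
/- An idempotent variety V is a Taylor variety if and only if V does not contain a two-element algebra all of whose term operations are projections. -/
/-- An identity `lhs ≈ rhs` between two `n`-ary terms. -/
structure Identity (σ : Signature) : Type where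
  n : ℕ
  lhs : Term σ n
  rhs : Term σ n

/-- `A` satisfies all identities of `E`; the variety axiomatized by `E` consists
of all such algebras (Birkhoff). -/
def Models {σ : Signature} (A : UAlgebra σ) (E : Set (Identity σ)) : Prop :=
  ∀ e ∈ E, ∀ x : Fin e.n → A.carrier, e.lhs.eval A x = e.rhs.eval A x

/-- The variety axiomatized by `E` is idempotent. -/
def IdempotentVariety {σ : Signature} (E : Set (Identity σ)) : Prop :=
  ∀ A : UAlgebra σ, Models A E → Idempotent A

/-- The variety axiomatized by `E` is Taylor: it has an idempotent term `t` such
that for each coordinate `j` a Taylor identity in two variables with `x` at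
position `j` on the left and `y` at position `j` on the right holds throughout
the variety. -/
def TaylorVariety {σ : Signature} (E : Set (Identity σ)) : Prop :=
  ∃ (k : ℕ) (t : Term σ k),
    (∀ A : UAlgebra σ, Models A E → ∀ a : A.carrier, t.eval A (fun _ => a) = a) ∧
    ∀ j : Fin k, ∃ u v : Fin k → Fin 2, u j = 0 ∧ v j = 1 ∧
      ∀ A : UAlgebra σ, Models A E → ∀ x : Fin 2 → A.carrier,
        t.eval A (fun i => x (u i)) = t.eval A (fun i => x (v i))

namespace TaylorAux

@[simp] theorem eval_var {σ : Signature} (A : UAlgebra σ) {n : ℕ} (i : Fin n)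
    (x : Fin n → A.carrier) : (Term.var i).eval A x = x i := rfl

@[simp] theorem eval_app {σ : Signature} (A : UAlgebra σ) {n : ℕ} (s : σ.symbols)
    (ts : Fin (σ.arity s) → Term σ n) (x : Fin n → A.carrier) :
    (Term.app s ts).eval A x = A.op s (fun j => (ts j).eval A x) := rfl

def subst {σ : Signature} {k m : ℕ} : Term σ k → (Fin k → Term σ m) → Term σ m
  | Term.var i, f => f i
  | Term.app s ts, f => Term.app s fun j => subst (ts j) f

theorem eval_subst {σ : Signature} (A : UAlgebra σ) {k m : ℕ} (t : Term σ k)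
    (f : Fin k → Term σ m) (x : Fin m → A.carrier) :
    (subst t f).eval A x = t.eval A fun i => (f i).eval A x := by
  induction t with
  | var i => rfl
  | app s ts ih =>
    show A.op s (fun j => (subst (ts j) f).eval A x) = A.op s _
    congr 1
    funext j
    exact ih j

def minor {σ : Signature} {k m : ℕ} (h : Fin k → Fin m) (t : Term σ k) : Term σ m :=
  subst t fun i => Term.var (h i)

theorem eval_minor {σ : Signature} (A : UAlgebra σ) {k m : ℕ} (h : Fin k → Fin m)
    (t : Term σ k) (x : Fin m → A.carrier) :
    (minor h t).eval A x = t.eval A fun i => x (h i) := by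
  rw [minor, eval_subst]; rfl

def Eq2 {σ : Signature} (E : Set (Identity σ)) {n : ℕ} (t t' : Term σ n) : Prop :=
  ∀ A : UAlgebra σ, Models A E → ∀ x : Fin n → A.carrier, t.eval A x = t'.eval A x

def TaylorAt {σ : Signature} (E : Set (Identity σ)) {k : ℕ} (t : Term σ k) (j : Fin k) : Prop :=
  ∃ u v : Fin k → Fin 2, u j = 0 ∧ v j = 1 ∧
    ∀ A : UAlgebra σ, Models A E → ∀ x : Fin 2 → A.carrier,
      t.eval A (fun i => x (u i)) = t.eval A (fun i => x (v i))

theorem eval_const {σ : Signature} {E : Set (Identity σ)} (hidem : IdempotentVariety E)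
    {A : UAlgebra σ} (hA : Models A E) {n : ℕ} (t : Term σ n) (a : A.carrier) :
    t.eval A (fun _ => a) = a := by
  induction t with
  | var i => rfl
  | app s ts ih =>
    show A.op s (fun j => (ts j).eval A fun _ => a) = a
    rw [show (fun j => (ts j).eval A fun _ => a) = fun _ => a from funext ih]
    exact hidem A hA s a

def TT (σ : Signature) : Type := Σ n : ℕ, Term σ n

def Le {σ : Signature} (E : Set (Identity σ)) (t T : TT σ) : Prop :=
  ∃ h : Fin T.1 → Fin t.1, Eq2 E t.2 (minor h T.2)

theorem Le.rfl {σ : Signature} (E : Set (Identity σ)) (t : TT σ) : Le E t t :=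
  ⟨id, fun A _ x => (eval_minor A id t.2 x).symm⟩

theorem eq2_minor_trans {σ : Signature} (E : Set (Identity σ)) {p q r : ℕ}
    {a : Term σ p} {B : Term σ q} {C : Term σ r} (w : Fin q → Fin p) (h : Fin r → Fin q)
    (h1 : Eq2 E a (minor w B)) (h2 : Eq2 E B (minor h C)) :
    Eq2 E a (minor (w ∘ h) C) := by
  intro A hA x
  rw [eval_minor]
  have e1 := h1 A hA x
  rw [eval_minor] at e1
  have e2 := h2 A hA (fun i => x (w i))
  rw [eval_minor] at e2
  exact e1.trans e2

theorem Le.trans {σ : Signature} {E : Set (Identity σ)} {t T T' : TT σ}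
    (h1 : Le E t T) (h2 : Le E T T') : Le E t T' := by
  obtain ⟨w, hw⟩ := h1
  obtain ⟨h, hh⟩ := h2
  exact ⟨w ∘ h, eq2_minor_trans E w h hw hh⟩

end TaylorAux
namespace TaylorAux

theorem directed {σ : Signature} (E : Set (Identity σ)) (hidem : IdempotentVariety E)
    (t1 t2 : TT σ) : ∃ T : TT σ, Le E t1 T ∧ Le E t2 T := by
  refine ⟨⟨t1.1 * t2.1, subst t1.2 (fun i => minor (fun j => finProdFinEquiv (i, j)) t2.2)⟩,
    ⟨fun q => (finProdFinEquiv.symm q).1, ?_⟩, ⟨fun q => (finProdFinEquiv.symm q).2, ?_⟩⟩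
  · intro A hA x
    rw [eval_minor, eval_subst]
    have h1 : ∀ i : Fin t1.1, (minor (fun j => finProdFinEquiv (i, j)) t2.2).eval A
        (fun q => x (finProdFinEquiv.symm q).1) = x i := by
      intro i
      rw [eval_minor]
      rw [show (fun j => x ((finProdFinEquiv.symm (finProdFinEquiv (i, j)))).1) = fun _ => x i
        from funext fun j => by rw [Equiv.symm_apply_apply]]
      exact eval_const hidem hA t2.2 (x i)
    rw [show (fun i => (minor (fun j => finProdFinEquiv (i, j)) t2.2).eval A
        (fun q => x (finProdFinEquiv.symm q).1)) = x from funext h1]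
  · intro A hA x
    rw [eval_minor, eval_subst]
    have h1 : ∀ i : Fin t1.1, (minor (fun j => finProdFinEquiv (i, j)) t2.2).eval A
        (fun q => x (finProdFinEquiv.symm q).2) = t2.2.eval A x := by
      intro i
      rw [eval_minor]
      rw [show (fun j => x ((finProdFinEquiv.symm (finProdFinEquiv (i, j)))).2) = x
        from funext fun j => by rw [Equiv.symm_apply_apply]]
    rw [show (fun i => (minor (fun j => finProdFinEquiv (i, j)) t2.2).eval A
        (fun q => x (finProdFinEquiv.symm q).2)) = fun _ => t2.2.eval A x from funext h1]
    exact (eval_const hidem hA t1.2 (t2.2.eval A x)).symm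

theorem directedFin {σ : Signature} (E : Set (Identity σ)) (hidem : IdempotentVariety E) :
    ∀ (m : ℕ) (f : Fin m → TT σ), ∃ T : TT σ, ∀ i, Le E (f i) T := by
  intro m
  induction m with
  | zero => exact fun f => ⟨⟨1, Term.var 0⟩, fun i => i.elim0⟩
  | succ m ih =>
    intro f
    obtain ⟨T0, hT0⟩ := ih (fun i => f i.castSucc)
    obtain ⟨T, h1, h2⟩ := directed E hidem T0 (f (Fin.last m))
    exact ⟨T, fun i => Fin.lastCases h2 (fun i => (hT0 i).trans h1) i⟩

theorem push_notTaylor {σ : Signature} (E : Set (Identity σ)) {t T : TT σ}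
    (w : Fin T.1 → Fin t.1) (hw : Eq2 E t.2 (minor w T.2)) {j : Fin T.1}
    (hj : ¬ TaylorAt E T.2 j) : ¬ TaylorAt E t.2 (w j) := by
  rintro ⟨u, v, hu, hv, huv⟩
  refine hj ⟨u ∘ w, v ∘ w, hu, hv, ?_⟩
  intro A hA x
  have h1 := hw A hA (fun i => x (u i))
  rw [eval_minor] at h1
  have h2 := hw A hA (fun i => x (v i))
  rw [eval_minor] at h2
  exact h1.symm.trans ((huv A hA x).trans h2)

theorem unique_push {σ : Signature} (E : Set (Identity σ)) {t T : TT σ}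
    (a b : Fin T.1 → Fin t.1) (ha : Eq2 E t.2 (minor a T.2)) (hb : Eq2 E t.2 (minor b T.2))
    {j : Fin T.1} (hj : ¬ TaylorAt E T.2 j) : a j = b j := by
  classical
  by_contra hne
  apply hj
  refine ⟨(fun p => if p = a j then 0 else 1) ∘ a, (fun p => if p = a j then 0 else 1) ∘ b,
    ?_, ?_, ?_⟩
  · show (if a j = a j then (0 : Fin 2) else 1) = 0
    simp
  · show (if b j = a j then (0 : Fin 2) else 1) = 1
    rw [if_neg (Ne.symm hne)]
  · intro A hA x
    have h1 := ha A hA (fun p => x (if p = a j then 0 else 1))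
    rw [eval_minor] at h1
    have h2 := hb A hA (fun p => x (if p = a j then 0 else 1))
    rw [eval_minor] at h2
    exact h1.symm.trans h2

end TaylorAux
namespace TaylorAux

theorem exists_proj_alg {σ : Signature} (E : Set (Identity σ))
    (hidem : IdempotentVariety E)
    (H : ∀ (k : ℕ) (t : Term σ k), ∃ j : Fin k, ¬ TaylorAt E t j) :
    ∃ A : UAlgebra σ, Models A E ∧ Nat.card A.carrier = 2 ∧
      ∀ (n : ℕ) (t : Term σ n), ∃ i : Fin n,
        ∀ x : Fin n → A.carrier, t.eval A x = x i := by
  classical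
  letI : Preorder (TT σ) :=
    { le := Le E
      le_refl := Le.rfl E
      le_trans := fun _ _ _ h1 h2 => TaylorAux.Le.trans h1 h2
      lt := fun a b => Le E a b ∧ ¬ Le E b a
      lt_iff_le_not_ge := fun _ _ => Iff.rfl }
  haveI : Nonempty (TT σ) := ⟨⟨1, Term.var 0⟩⟩
  haveI : IsDirected (TT σ) (· ≤ ·) := ⟨fun a b => by
    obtain ⟨T, h1, h2⟩ := directed E hidem a b
    exact ⟨T, h1, h2⟩⟩
  haveI : (Filter.atTop : Filter (TT σ)).NeBot := Filter.atTop_neBot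
  set U : Ultrafilter (TT σ) := Ultrafilter.of Filter.atTop with hUdef
  have hU : ∀ T : TT σ, {T' | Le E T T'} ∈ U := fun T =>
    Ultrafilter.of_le (Filter.atTop : Filter (TT σ)) (Filter.Ici_mem_atTop T)
  choose J hJ using fun T : TT σ => H T.1 T.2
  -- the pushforward function
  have hgdef : ∀ T T' : TT σ, ∃ jj : Fin T.1,
      ∀ _ : Le E T T', ∃ w : Fin T'.1 → Fin T.1,
        Eq2 E T.2 (minor w T'.2) ∧ w (J T') = jj := by
    intro T T'
    by_cases h : Le E T T'
    · exact ⟨h.choose (J T'), fun _ => ⟨h.choose, h.choose_spec, rfl⟩⟩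
    · exact ⟨J T, fun h2 => absurd h2 h⟩
  choose g hg using hgdef
  -- a.e. value of g
  have hex : ∀ T : TT σ, ∃ j : Fin T.1, {T' | Le E T T' ∧ g T T' = j} ∈ U := by
    intro T
    by_contra hc
    push_neg at hc
    have h2 : (⋂ j : Fin T.1, {T' | Le E T T' ∧ g T T' = j}ᶜ) ∈ U :=
      Filter.iInter_mem.2 fun j => (Ultrafilter.compl_mem_iff_notMem).2 (hc j)
    obtain ⟨T', hle, hall⟩ := Ultrafilter.nonempty_of_mem (Filter.inter_mem (hU T) h2)
    exact (Set.mem_iInter.1 hall (g T T')) ⟨hle, rfl⟩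
  choose Jstar hJstar using hex
  -- Jstar is a non-Taylor coordinate
  have hJstarNT : ∀ T : TT σ, ¬ TaylorAt E T.2 (Jstar T) := by
    intro T
    obtain ⟨T', hle, heq⟩ := Ultrafilter.nonempty_of_mem (hJstar T)
    obtain ⟨w, hw, hwv⟩ := hg T T' hle
    rw [← heq, ← hwv]
    exact push_notTaylor E w hw (hJ T')
  -- coherence: any minor witness evaluated at Jstar gives Jstar of the minor
  have Fspec : ∀ (T1 T : TT σ) (w : Fin T.1 → Fin T1.1),
      Eq2 E T1.2 (minor w T.2) → w (Jstar T) = Jstar T1 := by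
    intro T1 T w hw
    obtain ⟨T', h1, h2⟩ :=
      Ultrafilter.nonempty_of_mem (Filter.inter_mem (hJstar T) (hJstar T1))
    obtain ⟨hleT, hgT⟩ := h1
    obtain ⟨hleT1, hgT1⟩ := h2
    obtain ⟨w1, hw1, hw1v⟩ := hg T T' hleT
    obtain ⟨w2, hw2, hw2v⟩ := hg T1 T' hleT1
    have hcomp : Eq2 E T1.2 (minor (w ∘ w1) T'.2) := eq2_minor_trans E w w1 hw hw1
    have huniq := unique_push E (w ∘ w1) w2 hcomp hw2 (hJ T')
    calc w (Jstar T) = w (w1 (J T')) := by rw [← hgT, ← hw1v]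
      _ = w2 (J T') := huniq
      _ = Jstar T1 := by rw [hw2v, hgT1]
  -- F (var i) = i
  have Fvar : ∀ (n : ℕ) (i : Fin n), Jstar ⟨n, Term.var i⟩ = i := by
    intro n i
    have hw : Eq2 E (Term.var i : Term σ n)
        (minor (fun _ : Fin n => i) (Term.var i : Term σ n)) := by
      intro A hA x
      rw [eval_minor]
      rfl
    exact (Fspec ⟨n, Term.var i⟩ ⟨n, Term.var i⟩ (fun _ => i) hw).symm
  -- F respects Eq2
  have Feq : ∀ (n : ℕ) (t t' : Term σ n), Eq2 E t t' →
      Jstar ⟨n, t⟩ = Jstar ⟨n, t'⟩ := by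
    intro n t t' h
    have hw : Eq2 E t' (minor (id : Fin n → Fin n) t) := by
      intro A hA x
      rw [eval_minor]
      exact (h A hA x).symm
    exact (Fspec ⟨n, t'⟩ ⟨n, t⟩ id hw)
  -- composition
  have Fcomp : ∀ (m n : ℕ) (b : Term σ m) (ts : Fin m → Term σ n),
      Jstar ⟨n, subst b ts⟩ = Jstar ⟨n, ts (Jstar ⟨m, b⟩)⟩ := by
    intro m n b ts
    obtain ⟨S, hS⟩ := directedFin E hidem m (fun i => ⟨n, ts i⟩)
    choose sg hsg using hS
    set T : TT σ :=
      ⟨m * S.1, subst b (fun i => minor (fun w => finProdFinEquiv (i, w)) S.2)⟩ with hT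
    have hβ : Eq2 E b (minor (fun q : Fin T.1 => (finProdFinEquiv.symm q).1) T.2) := by
      intro A hA x
      rw [eval_minor, eval_subst]
      have h1 : ∀ i : Fin m, (minor (fun w => finProdFinEquiv (i, w)) S.2).eval A
          (fun q => x (finProdFinEquiv.symm q).1) = x i := by
        intro i
        rw [eval_minor]
        rw [show (fun w => x ((finProdFinEquiv.symm (finProdFinEquiv (i, w)))).1) = fun _ => x i
          from funext fun w => by rw [Equiv.symm_apply_apply]]
        exact eval_const hidem hA S.2 (x i)
      rw [show (fun i => (minor (fun w => finProdFinEquiv (i, w)) S.2).eval A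
          (fun q => x (finProdFinEquiv.symm q).1)) = x from funext h1]
    have hρ : Eq2 E (subst b ts)
        (minor (fun q : Fin T.1 =>
          sg (finProdFinEquiv.symm q).1 (finProdFinEquiv.symm q).2) T.2) := by
      intro A hA x
      rw [eval_minor, eval_subst, eval_subst]
      congr 1
      funext i
      rw [eval_minor]
      have e1 : (fun w => x (sg ((finProdFinEquiv.symm (finProdFinEquiv (i, w)))).1
          ((finProdFinEquiv.symm (finProdFinEquiv (i, w)))).2)) = fun w => x (sg i w) := by
        funext w
        rw [Equiv.symm_apply_apply]
      rw [e1]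
      have e2 := hsg i A hA x
      rw [eval_minor] at e2
      exact e2
    have hblock : ∀ i : Fin m, Eq2 E (ts i)
        (minor (fun q : Fin T.1 => sg i (finProdFinEquiv.symm q).2) T.2) := by
      intro i A hA x
      rw [eval_minor, eval_subst]
      have h1 : ∀ i' : Fin m, (minor (fun w => finProdFinEquiv (i', w)) S.2).eval A
          (fun q => x (sg i (finProdFinEquiv.symm q).2)) = (ts i).eval A x := by
        intro i'
        rw [eval_minor]
        rw [show (fun w => x (sg i ((finProdFinEquiv.symm (finProdFinEquiv (i', w)))).2)) =
          fun w => x (sg i w) from funext fun w => by rw [Equiv.symm_apply_apply]]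
        have e2 := hsg i A hA x
        rw [eval_minor] at e2
        exact e2.symm
      rw [show (fun i' => (minor (fun w => finProdFinEquiv (i', w)) S.2).eval A
          (fun q => x (sg i (finProdFinEquiv.symm q).2))) = fun _ => (ts i).eval A x
        from funext h1]
      exact (eval_const hidem hA b ((ts i).eval A x)).symm
    have e1 := Fspec ⟨m, b⟩ T (fun q => (finProdFinEquiv.symm q).1) hβ
    have e2 := Fspec ⟨n, subst b ts⟩ T
      (fun q => sg (finProdFinEquiv.symm q).1 (finProdFinEquiv.symm q).2) hρ
    have e3 := Fspec ⟨n, ts (Jstar ⟨m, b⟩)⟩ T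
      (fun q => sg (Jstar ⟨m, b⟩) (finProdFinEquiv.symm q).2) (hblock (Jstar ⟨m, b⟩))
    rw [← e2, ← e3, ← e1]
  -- the two-element algebra
  set B : UAlgebra σ :=
    ⟨Fin 2, fun s x => x (Jstar ⟨σ.arity s, Term.app s (fun i => Term.var i)⟩)⟩ with hB
  have evalB : ∀ (n : ℕ) (t : Term σ n) (x : Fin n → Fin 2),
      t.eval B x = x (Jstar ⟨n, t⟩) := by
    intro n t
    induction t with
    | var i =>
      intro x
      rw [Fvar]
      rfl
    | app s ts ih =>
      intro x
      have hF : Jstar ⟨n, Term.app s ts⟩ =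
          Jstar ⟨n, ts (Jstar ⟨σ.arity s, Term.app s (fun i => Term.var i)⟩)⟩ :=
        Fcomp (σ.arity s) n (Term.app s (fun i => Term.var i)) ts
      rw [hF]
      exact ih (Jstar ⟨σ.arity s, Term.app s (fun i => Term.var i)⟩) x
  refine ⟨B, ?_, by simp [hB, Nat.card_eq_fintype_card],
    fun n t => ⟨Jstar ⟨n, t⟩, evalB n t⟩⟩
  intro e he x
  rw [evalB e.n e.lhs x, evalB e.n e.rhs x,
    Feq e.n e.lhs e.rhs (fun A hA y => hA e he y)]

end TaylorAux
/-- **Taylor.** An idempotent variety is Taylor iff it contains no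
two-element algebra all of whose term operations are projections. -/
theorem taylor_characterization {σ : Signature} (E : Set (Identity σ))
    (hidem : IdempotentVariety E) :
    TaylorVariety E ↔
      ¬∃ A : UAlgebra σ, Models A E ∧ Nat.card A.carrier = 2 ∧
        ∀ (n : ℕ) (t : Term σ n), ∃ i : Fin n,
          ∀ x : Fin n → A.carrier, t.eval A x = x i := by
  classical
  constructor
  · rintro ⟨k, t, hidem', htay⟩ ⟨A, hA, hcard, hproj⟩
    obtain ⟨i, hi⟩ := hproj k t
    obtain ⟨u, v, hu, hv, huv⟩ := htay i
    have hfin : Finite A.carrier := Nat.finite_of_card_ne_zero (by omega)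
    have hnt : Nontrivial A.carrier := Finite.one_lt_card_iff_nontrivial.1 (by omega)
    obtain ⟨a, b, hab⟩ := exists_pair_ne A.carrier
    have h := huv A hA (fun m => if m = 0 then a else b)
    rw [hi, hi, hu, hv] at h
    simp at h
    exact hab h
  · intro hno
    by_contra hT
    apply hno
    apply TaylorAux.exists_proj_alg E hidem
    intro k t
    by_contra hc
    push_neg at hc
    exact hT ⟨k, t, fun A hA a => TaylorAux.eval_const hidem hA t a, hc⟩
end

section
/- Let A, B be finite algebras in a Taylor variety, R a subdirect subalgebra of A × B, and E an absorbing subalgebra of R. If R is linked then E is linked. -/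
/-!
Given `(a, b), (a', b') ∈ E`, idempotency gives `a = s(a, …, a)` and `a' = s(a', …, a')`, and we
pass from one to the other by replacing one argument at a time. While argument `j` moves along an
`R`-path from `a` to `a'`, every other argument is a fixed pair of `E`, so by absorption `s` maps
each fork `x — y — x'` of that path to a fork of `E`.
-/

namespace Term

variable {σ : Signature}

theorem eval_prod (A B : UAlgebra σ) {n : ℕ} (t : Term σ n)
    (x : Fin n → A.carrier × B.carrier) :
    t.eval (A.prod B) x = (t.eval A (Prod.fst ∘ x), t.eval B (Prod.snd ∘ x)) := by
  induction t with
  | var i => rfl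
  | app f ts ih =>
    change (A.prod B).op f (fun j => (ts j).eval (A.prod B) x) = _
    simp only [ih]
    rfl

theorem eval_const_of_idempotent {A : UAlgebra σ} (hA : Idempotent A) {n : ℕ} (t : Term σ n)
    (a : A.carrier) : t.eval A (fun _ => a) = a := by
  induction t with
  | var i => rfl
  | app f ts ih =>
    change A.op f (fun j => (ts j).eval A fun _ => a) = a
    simp only [ih]
    exact hA f a

end Term

namespace AbsorbsWithIn

variable {σ : Signature} {A B : UAlgebra σ} {R E : Set (A.carrier × B.carrier)} {n : ℕ}
  {s : Term σ n}

theorem eval_update_mem (habs : AbsorbsWithIn (A.prod B) R E s) (hER : E ⊆ R)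
    {p : Fin n → A.carrier × B.carrier} {j : Fin n} (hp : ∀ i, i ≠ j → p i ∈ E)
    {x : A.carrier} {y : B.carrier} (hxy : (x, y) ∈ R) :
    (s.eval A (Function.update (Prod.fst ∘ p) j x),
      s.eval B (Function.update (Prod.snd ∘ p) j y)) ∈ E := by
  have hmem := habs j (Function.update p j (x, y) : Fin n → A.carrier × B.carrier)
    (fun i => ?_) (fun i hi => ?_)
  · rwa [Term.eval_prod, Function.comp_update, Function.comp_update] at hmem
  · rcases eq_or_ne i j with rfl | hi
    · simp only [Function.update_self]
      exact hxy
    · simp only [Function.update_of_ne hi]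
      exact hER (hp i hi)
  · simp only [Function.update_of_ne hi]
    exact hp i hi

theorem linkedPair_eval_update (habs : AbsorbsWithIn (A.prod B) R E s) (hER : E ⊆ R)
    {p : Fin n → A.carrier × B.carrier} {j : Fin n} (hp : ∀ i, i ≠ j → p i ∈ E)
    {x x' : A.carrier} (h : LinkedPair R x x') :
    LinkedPair E (s.eval A (Function.update (Prod.fst ∘ p) j x))
      (s.eval A (Function.update (Prod.fst ∘ p) j x')) :=
  Relation.ReflTransGen.lift (fun x => s.eval A (Function.update (Prod.fst ∘ p) j x))
    (fun _ _ ⟨_, hxy, hx'y⟩ =>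
      ⟨_, habs.eval_update_mem hER hp hxy, habs.eval_update_mem hER hp hx'y⟩) _ _ h

theorem linkedPair_eval (habs : AbsorbsWithIn (A.prod B) R E s) (hER : E ⊆ R)
    {p p' : Fin n → A.carrier × B.carrier} (hp : ∀ i, p i ∈ E) (hp' : ∀ i, p' i ∈ E)
    (h : ∀ i, LinkedPair R (p i).1 (p' i).1) :
    LinkedPair E (s.eval A (Prod.fst ∘ p)) (s.eval A (Prod.fst ∘ p')) := by
  classical
  suffices ∀ T : Finset (Fin n),
      LinkedPair E (s.eval A (Prod.fst ∘ p)) (s.eval A (Prod.fst ∘ T.piecewise p' p)) by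
    simpa using this Finset.univ
  intro T
  induction T using Finset.induction_on with
  | empty =>
    rw [Finset.piecewise_empty]
    exact Relation.ReflTransGen.refl
  | insert j T hj ih =>
    have step := habs.linkedPair_eval_update hER (j := j)
      (fun i _ => T.piecewise_cases p' p (· ∈ E) (hp' i) (hp i)) (h j)
    rw [Finset.piecewise_insert, Function.comp_update]
    rw [← Finset.piecewise_eq_of_notMem T p' p hj, ← Function.comp_apply (f := Prod.fst),
      Function.update_eq_self] at step
    exact ih.trans step

end AbsorbsWithIn

theorem absorbing_of_linked_is_linked_general {σ : Signature} (A B : UAlgebra σ)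
    (hIA : Idempotent A)
    (R : Set (A.carrier × B.carrier))
    (E : Set (A.carrier × B.carrier)) (hER : E ⊆ R)
    {n : ℕ} (s : Term σ n) (habs : AbsorbsWithIn (A.prod B) R E s)
    (hlink : IsLinked R) :
    IsLinked E := by
  rintro a a' ⟨b, hab⟩ ⟨b', hab'⟩
  have h := habs.linkedPair_eval hER (p := fun _ => (a, b)) (p' := fun _ => (a', b'))
    (fun _ => hab) (fun _ => hab') (fun _ => hlink a a' ⟨b, hER hab⟩ ⟨b', hER hab'⟩)
  simpa [Function.comp_def, Term.eval_const_of_idempotent hIA] using h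

/-- Let `A`, `B` be finite algebras in a Taylor variety, `R` a
subdirect subuniverse of `A × B` and `E` an absorbing subalgebra of `R`. If `R`
is linked then `E` is linked. -/
theorem absorbing_of_linked_is_linked {σ : Signature} (A B : UAlgebra σ)
    [Fintype A.carrier] [Fintype B.carrier]
    (hIA : Idempotent A) (hIB : Idempotent B)
    {k : ℕ} (t : Term σ k) (hTA : IsTaylorTerm A t) (hTB : IsTaylorTerm B t)
    (R : Set (A.carrier × B.carrier)) (hR : Subuniverse (A.prod B) R)
    (hsub : Subdirect2 R)
    (E : Set (A.carrier × B.carrier)) (hE : Subuniverse (A.prod B) E) (hER : E ⊆ R)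
    {n : ℕ} (s : Term σ n) (habs : AbsorbsWithIn (A.prod B) R E s)
    (hlink : IsLinked R) :
    IsLinked E :=
  absorbing_of_linked_is_linked_general A B hIA R E hER s habs hlink
end

section
/- Let A be a finite algebra and G = (A, E) a smooth digraph whose edge relation E is a subuniverse of A². If B is a subuniverse (respectively, absorbing subuniverse) of A, then the smooth part of the induced subdigraph on B is a subuniverse (respectively, absorbing subuniverse) of A. -/
/-- Connectivity via an oriented path pattern (`true` = forward edge). -/
def ConnVia {α : Type} (E : α → α → Prop) : List Bool → α → α → Prop
  | [], a, b => a = b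
  | d :: P, a, b => ∃ c, (if d then E a c else E c a) ∧ ConnVia E P c b

/-- Algebraic length of an oriented path pattern: forward minus backward edges. -/
def algLen (P : List Bool) : ℤ := (P.count true : ℤ) - (P.count false : ℤ)

/-- A digraph is smooth if every vertex has an outgoing and an incoming edge. -/
def IsSmooth {α : Type} (E : α → α → Prop) : Prop := ∀ a, (∃ b, E a b) ∧ (∃ b, E b a)

/-- Directed walks of length `k` from `a` to `b` staying inside `H`
(all vertices after the first are required to lie in `H`). -/
def stepsIn {α : Type} (E : α → α → Prop) (H : Set α) : ℕ → α → α → Prop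
  | 0, a, b => a = b
  | k + 1, a, b => ∃ c ∈ H, E a c ∧ stepsIn E H k c b

/-- The smooth part of the subdigraph induced on `B`: the largest `W ⊆ B` such
that every vertex of `W` has an out- and an in-neighbour inside `W`. -/
def SmoothPart {α : Type} (E : α → α → Prop) (B : Set α) : Set α :=
  ⋃₀ {W | W ⊆ B ∧ ∀ a ∈ W, (∃ b ∈ W, E a b) ∧ (∃ b ∈ W, E b a)}

section AuxLemmas
variable {α : Type}

lemma stepsIn_trunc (E : α → α → Prop) (H : Set α) :
    ∀ (k m : ℕ), k ≤ m → ∀ (a b : α), stepsIn E H m a b → ∃ c, stepsIn E H k a c := by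
  intro k
  induction k with
  | zero => exact fun m _ a b _ => ⟨a, rfl⟩
  | succ k ih =>
    intro m hkm a b h
    match m, hkm, h with
    | m + 1, hkm, h =>
      obtain ⟨c, hc, hac, hrest⟩ := h
      obtain ⟨d, hd⟩ := ih m (Nat.succ_le_succ_iff.mp hkm) c b hrest
      exact ⟨d, c, hc, hac, hd⟩

lemma stepsIn_comb {n : ℕ} (E : α → α → Prop) (H : Fin n → Set α) (B : Set α)
    (F : (Fin n → α) → α)
    (hF : ∀ a b : Fin n → α, (∀ i, E (a i) (b i)) → E (F a) (F b))
    (hB : ∀ a : Fin n → α, (∀ i, a i ∈ H i) → F a ∈ B) :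
    ∀ (m : ℕ) (a b : Fin n → α), (∀ i, stepsIn E (H i) m (a i) (b i)) →
      stepsIn E B m (F a) (F b) := by
  intro m
  induction m with
  | zero => intro a b h; exact congrArg F (funext h)
  | succ m ih =>
    intro a b h
    have h' : ∀ i, ∃ c, c ∈ H i ∧ E (a i) c ∧ stepsIn E (H i) m c (b i) := h
    choose c hc hac hrest using h'
    exact ⟨F c, hB c hc, hF a c hac, ih c b hrest⟩

lemma stepsIn_univ (E : α → α → Prop) (hs : ∀ a : α, ∃ b, E a b) :
    ∀ (m : ℕ) (a : α), ∃ b, stepsIn E Set.univ m a b := by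
  intro m
  induction m with
  | zero => exact fun a => ⟨a, rfl⟩
  | succ m ih =>
    intro a
    obtain ⟨c, hc⟩ := hs a
    obtain ⟨b, hb⟩ := ih c
    exact ⟨b, c, trivial, hc, hb⟩

lemma stepsIn_of_family (E : α → α → Prop) (B W' : Set α) (hWB : W' ⊆ B)
    (hout : ∀ a ∈ W', ∃ b ∈ W', E a b) :
    ∀ (m : ℕ) (a : α), a ∈ W' → ∃ b, stepsIn E B m a b := by
  intro m
  induction m with
  | zero => exact fun a _ => ⟨a, rfl⟩
  | succ m ih =>
    intro a ha
    obtain ⟨c, hcW, hac⟩ := hout a ha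
    obtain ⟨b, hb⟩ := ih c hcW
    exact ⟨b, c, hWB hcW, hac, hb⟩

lemma key_step [Finite α] (E : α → α → Prop) (B : Set α) (a : α) (ha : a ∈ B)
    (hf : ∀ m, ∃ b, stepsIn E B m a b)
    (hb : ∀ m, ∃ b, stepsIn (fun x y => E y x) B m a b) :
    ∃ c ∈ B, E a c ∧ (∀ m, ∃ b, stepsIn E B m c b) ∧
      (∀ m, ∃ b, stepsIn (fun x y => E y x) B m c b) := by
  have h : ∀ m : ℕ, ∃ c, c ∈ B ∧ E a c ∧ ∃ b, stepsIn E B m c b := by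
    intro m
    obtain ⟨b, c, hc, hac, hr⟩ := hf (m + 1)
    exact ⟨c, hc, hac, b, hr⟩
  choose g hg1 hg2 hg3 using h
  obtain ⟨c, hc⟩ := Finite.exists_infinite_fiber g
  have hcinf : (g ⁻¹' {c}).Infinite := Set.infinite_coe_iff.mp hc
  obtain ⟨m0, hm0, -⟩ := hcinf.exists_gt 0
  have hgm0 : g m0 = c := hm0
  have hac : E a c := hgm0 ▸ hg2 m0
  refine ⟨c, hgm0 ▸ hg1 m0, hac, ?_, ?_⟩
  · intro m
    obtain ⟨m', hm', hlt⟩ := hcinf.exists_gt m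
    have hgm' : g m' = c := hm'
    obtain ⟨b, hbw⟩ := hg3 m'
    rw [hgm'] at hbw
    exact stepsIn_trunc E B m m' (le_of_lt hlt) c b hbw
  · intro m
    match m with
    | 0 => exact ⟨c, rfl⟩
    | m + 1 =>
      obtain ⟨b, hbw⟩ := hb m
      exact ⟨b, a, ha, hac, hbw⟩

end AuxLemmas

lemma eval_pres {σ : Signature} (A : UAlgebra σ) (E : A.carrier → A.carrier → Prop)
    (hpres : ∀ (s : σ.symbols) (a b : Fin (σ.arity s) → A.carrier),
      (∀ i, E (a i) (b i)) → E (A.op s a) (A.op s b)) :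
    ∀ {n : ℕ} (t : Term σ n) (a b : Fin n → A.carrier),
      (∀ i, E (a i) (b i)) → E (t.eval A a) (t.eval A b) := by
  intro n t
  induction t with
  | var i => exact fun a b h => h i
  | app s ts ih => exact fun a b h => hpres s _ _ fun j => ih j a b h

/-- Let `A` be a finite algebra and `G = (A, E)` a smooth
digraph with `E` a subuniverse of `A²`. If `B` is a subuniverse (resp. absorbing
subuniverse) of `A`, then so is the smooth part of the subdigraph induced on `B`. -/
theorem smooth_part_subuniverse {σ : Signature} (A : UAlgebra σ) [Fintype A.carrier]
    (E : A.carrier → A.carrier → Prop)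
    (hpres : ∀ (s : σ.symbols) (a b : Fin (σ.arity s) → A.carrier),
      (∀ i, E (a i) (b i)) → E (A.op s a) (A.op s b))
    (hsmooth : IsSmooth E) (B : Set A.carrier) :
    (Subuniverse A B → Subuniverse A (SmoothPart E B)) ∧
    (Absorbing A B → Absorbing A (SmoothPart E B)) := by
  set W : Set A.carrier := {a | a ∈ B ∧ (∀ m, ∃ b, stepsIn E B m a b) ∧
    (∀ m, ∃ b, stepsIn (fun x y => E y x) B m a b)} with hWdef
  have hpres' : ∀ (s : σ.symbols) (a b : Fin (σ.arity s) → A.carrier),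
      (∀ i, (fun x y => E y x) (a i) (b i)) → (fun x y => E y x) (A.op s a) (A.op s b) :=
    fun s a b h => hpres s b a h
  -- the smooth part equals W
  have hWeq : SmoothPart E B = W := by
    apply Set.eq_of_subset_of_subset
    · rintro a ⟨W', ⟨hWB, hW⟩, haW⟩
      refine ⟨hWB haW, ?_, ?_⟩
      · exact fun m => stepsIn_of_family E B W' hWB (fun x hx => (hW x hx).1) m a haW
      · exact fun m => stepsIn_of_family (fun x y => E y x) B W' hWB
          (fun x hx => (hW x hx).2) m a haW
    · intro a ha
      refine ⟨W, ⟨fun x hx => hx.1, ?_⟩, ha⟩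
      intro x hx
      constructor
      · obtain ⟨c, hcB, hxc, hcf, hcb⟩ := key_step E B x hx.1 hx.2.1 hx.2.2
        exact ⟨c, ⟨hcB, hcf, hcb⟩, hxc⟩
      · obtain ⟨c, hcB, hxc, hcf, hcb⟩ :=
          key_step (fun x y => E y x) B x hx.1 hx.2.2 hx.2.1
        exact ⟨c, ⟨hcB, hcb, hcf⟩, hxc⟩
  rw [hWeq]
  have hsub : Subuniverse A B → Subuniverse A W := by
    intro hB s a ha
    refine ⟨hB s a fun i => (ha i).1, ?_, ?_⟩
    · intro m
      have h : ∀ i, ∃ b, stepsIn E B m (a i) b := fun i => (ha i).2.1 m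
      choose b hb using h
      exact ⟨A.op s b, stepsIn_comb E (fun _ => B) B (A.op s) (hpres s)
        (fun c hc => hB s c hc) m a b hb⟩
    · intro m
      have h : ∀ i, ∃ b, stepsIn (fun x y => E y x) B m (a i) b := fun i => (ha i).2.2 m
      choose b hb using h
      exact ⟨A.op s b, stepsIn_comb (fun x y => E y x) (fun _ => B) B (A.op s) (hpres' s)
        (fun c hc => hB s c hc) m a b hb⟩
  refine ⟨hsub, ?_⟩
  rintro ⟨hBsub, n, t, habs⟩
  refine ⟨hsub hBsub, n, t, ?_⟩
  intro k a hak
  set H : Fin n → Set A.carrier := fun i => if i = k then Set.univ else B with hHdef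
  have hHmem : ∀ (c : Fin n → A.carrier), (∀ i, c i ∈ H i) → t.eval A c ∈ B := by
    intro c hc
    refine habs k c fun i hi => ?_
    have := hc i
    simpa [hHdef, hi] using this
  refine ⟨habs k a fun i hi => (hak i hi).1, ?_, ?_⟩
  · intro m
    have h : ∀ i, ∃ b, stepsIn E (H i) m (a i) b := by
      intro i
      by_cases hi : i = k
      · simpa [hHdef, hi] using stepsIn_univ E (fun x => (hsmooth x).1) m (a i)
      · simpa [hHdef, hi] using (hak i hi).2.1 m
    choose b hb using h
    exact ⟨t.eval A b, stepsIn_comb E H B (fun x => t.eval A x)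
      (eval_pres A E hpres t) hHmem m a b hb⟩
  · intro m
    have h : ∀ i, ∃ b, stepsIn (fun x y => E y x) (H i) m (a i) b := by
      intro i
      by_cases hi : i = k
      · simpa [hHdef, hi] using
          stepsIn_univ (fun x y => E y x) (fun x => (hsmooth x).2) m (a i)
      · simpa [hHdef, hi] using (hak i hi).2.2 m
    choose b hb using h
    exact ⟨t.eval A b, stepsIn_comb (fun x y => E y x) H B (fun x => t.eval A x)
      (eval_pres A (fun x y => E y x) hpres' t) hHmem m a b hb⟩
end

section
/- In a smooth digraph G, if a vertex a is connected to a vertex b via a directed path of k forward edges, then a is connected to b via every oriented path of algebraic length k. -/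
noncomputable def fwdChain {α : Type} (E : α → α → Prop) (h : IsSmooth E) (b : α) : ℕ → α
  | 0 => b
  | n + 1 => Classical.choose (h (fwdChain E h b n)).1

lemma fwdChain_spec {α : Type} (E : α → α → Prop) (h : IsSmooth E) (b : α) (n : ℕ) :
    E (fwdChain E h b n) (fwdChain E h b (n + 1)) :=
  Classical.choose_spec (h (fwdChain E h b n)).1

noncomputable def bwdChain {α : Type} (E : α → α → Prop) (h : IsSmooth E) (a : α) : ℕ → α
  | 0 => a
  | n + 1 => Classical.choose (h (bwdChain E h a n)).2

lemma bwdChain_spec {α : Type} (E : α → α → Prop) (h : IsSmooth E) (a : α) (n : ℕ) :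
    E (bwdChain E h a (n + 1)) (bwdChain E h a n) :=
  Classical.choose_spec (h (bwdChain E h a n)).2

lemma exists_path_fun {α : Type} (E : α → α → Prop) :
    ∀ (k : ℕ) (a b : α), ConnVia E (List.replicate k true) a b →
      ∃ p : ℕ → α, p 0 = a ∧ p k = b ∧ ∀ n < k, E (p n) (p (n + 1)) := by
  intro k
  induction k with
  | zero =>
    intro a b h
    exact ⟨fun _ => a, rfl, h, by omega⟩
  | succ k ih =>
    intro a b h
    obtain ⟨c, hac, hcb⟩ := h
    simp only [if_pos] at hac
    obtain ⟨p, hp0, hpk, hpe⟩ := ih c b hcb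
    refine ⟨fun n => if n = 0 then a else p (n - 1), rfl, by simp [hpk], ?_⟩
    intro n hn
    cases n with
    | zero => simpa [hp0] using hac
    | succ m => simpa using hpe m (by omega)

lemma algLen_cons (d : Bool) (P : List Bool) :
    algLen (d :: P) = algLen P + (if d then 1 else -1) := by
  cases d <;> simp [algLen, List.count_cons] <;> ring

lemma connVia_walk {α : Type} (E : α → α → Prop) (w : ℤ → α)
    (hw : ∀ n, E (w n) (w (n + 1))) :
    ∀ (P : List Bool) (s : ℤ), ConnVia E P (w s) (w (s + algLen P)) := by
  intro P
  induction P with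
  | nil => intro s; simp [ConnVia, algLen]
  | cons d P ih =>
    intro s
    cases d with
    | true =>
      refine ⟨w (s + 1), by simpa using hw s, ?_⟩
      have := ih (s + 1)
      have h2 : s + algLen (true :: P) = s + 1 + algLen P := by
        rw [algLen_cons]; simp; ring
      rwa [h2]
    | false =>
      refine ⟨w (s - 1), by simpa using hw (s - 1), ?_⟩
      have := ih (s - 1)
      have h2 : s + algLen (false :: P) = s - 1 + algLen P := by
        rw [algLen_cons]; simp; ring
      rwa [h2]

/-- In a smooth digraph, if `a` is connected to `b` by a
directed path of `k` forward edges, then `a` is connected to `b` via every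
oriented path of algebraic length `k`. -/
theorem smooth_connect_any_path {α : Type} (E : α → α → Prop) (hsmooth : IsSmooth E)
    (k : ℕ) (a b : α) (h : ConnVia E (List.replicate k true) a b) :
    ∀ P : List Bool, algLen P = (k : ℤ) → ConnVia E P a b := by
  obtain ⟨p, hp0, hpk, hpe⟩ := exists_path_fun E k a b h
  -- full forward walk on ℕ: the path then the forward chain from b
  set f : ℕ → α := fun n => if n ≤ k then p n else fwdChain E hsmooth b (n - k) with hf
  have hfe : ∀ n, E (f n) (f (n + 1)) := by
    intro n
    rcases lt_trichotomy n k with hn | hn | hn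
    · simp only [hf, if_pos (by omega : n ≤ k), if_pos (by omega : n + 1 ≤ k)]
      exact hpe n hn
    · subst hn
      have h1 : f n = b := by simp [hf, hpk]
      have h2 : f (n + 1) = fwdChain E hsmooth b 1 := by
        simp only [hf, if_neg (by omega : ¬ n + 1 ≤ n)]
        congr 1; omega
      rw [h1, h2]
      exact fwdChain_spec E hsmooth b 0
    · have h1 : f n = fwdChain E hsmooth b (n - k) := by
        simp [hf, if_neg (by omega : ¬ n ≤ k)]
      have h2 : f (n + 1) = fwdChain E hsmooth b (n - k + 1) := by
        simp only [hf, if_neg (by omega : ¬ n + 1 ≤ k)]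
        congr 1; omega
      rw [h1, h2]
      exact fwdChain_spec E hsmooth b (n - k)
  -- the two-sided walk
  set w : ℤ → α := fun n => if n < 0 then bwdChain E hsmooth a (-n).toNat else f n.toNat
    with hwdef
  have hw : ∀ n : ℤ, E (w n) (w (n + 1)) := by
    intro n
    rcases lt_trichotomy n (-1) with hn | hn | hn
    · have h1 : w n = bwdChain E hsmooth a (-n).toNat := by
        simp [hwdef, if_pos (by omega : n < 0)]
      have h2 : w (n + 1) = bwdChain E hsmooth a (-(n + 1)).toNat := by
        simp [hwdef, if_pos (by omega : n + 1 < 0)]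
      have h3 : (-n).toNat = (-(n + 1)).toNat + 1 := by omega
      rw [h1, h2, h3]
      exact bwdChain_spec E hsmooth a _
    · subst hn
      have h1 : w (-1) = bwdChain E hsmooth a 1 := by norm_num [hwdef]
      have h2 : w (-1 + 1) = a := by norm_num [hwdef, hf, hp0]
      rw [h1, h2]
      have := bwdChain_spec E hsmooth a 0
      simpa [bwdChain] using this
    · have h1 : w n = f n.toNat := by
        simp [hwdef, if_neg (by omega : ¬ n < 0)]
      have h2 : w (n + 1) = f (n.toNat + 1) := by
        simp only [hwdef, if_neg (by omega : ¬ n + 1 < 0)]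
        congr 1; omega
      rw [h1, h2]
      exact hfe n.toNat
  intro P hP
  have := connVia_walk E w hw P 0
  rw [hP] at this
  have hw0 : w 0 = a := by simp [hwdef, hf, hp0]
  have hwk : w ((0 : ℤ) + (k : ℤ)) = b := by
    simp only [hwdef, zero_add]
    rw [if_neg (by omega : ¬ (k : ℤ) < 0)]
    simp [hf, hpk]
  rwa [hw0, hwk] at this
end

section
/- A finite idempotent algebra A has a cyclic term operation of arity k if and only if every nonempty cyclic subalgebra of A^k contains a constant tuple. -/
-- AUX START
namespace CycAux

variable {σ : Signature}

def rename {n m : ℕ} (r : Fin n → Fin m) : Term σ n → Term σ m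
  | .var i => .var (r i)
  | .app s ts => .app s fun j => rename r (ts j)

lemma eval_rename (A : UAlgebra σ) {n m : ℕ} (r : Fin n → Fin m) (t : Term σ n)
    (x : Fin m → A.carrier) : (rename r t).eval A x = t.eval A (fun i => x (r i)) := by
  induction t with
  | var i => rfl
  | app s ts ih => simp only [rename, Term.eval, ih]

def subst {n m : ℕ} (f : Fin n → Term σ m) : Term σ n → Term σ m
  | .var i => f i
  | .app s ts => .app s fun j => subst f (ts j)

lemma eval_subst (A : UAlgebra σ) {n m : ℕ} (f : Fin n → Term σ m) (t : Term σ n)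
    (x : Fin m → A.carrier) : (subst f t).eval A x = t.eval A (fun i => (f i).eval A x) := by
  induction t with
  | var i => rfl
  | app s ts ih => simp only [subst, Term.eval, ih]

lemma eval_idem {A : UAlgebra σ} (hI : Idempotent A) {n : ℕ} (t : Term σ n) (c : A.carrier) :
    t.eval A (fun _ => c) = c := by
  induction t with
  | var i => rfl
  | app s ts ih => simp only [Term.eval, ih]; exact hI s c

/-- shift a tuple by `m`. -/
def sh {α : Type} {k : ℕ} [NeZero k] (m : ℕ) (x : Fin k → α) : Fin k → α :=
  fun j => x ⟨(j.val + m) % k, Nat.mod_lt _ (Nat.pos_of_ne_zero (NeZero.ne k))⟩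

lemma sh_apply {α : Type} {k : ℕ} [NeZero k] (m : ℕ) (x : Fin k → α) (j : Fin k) :
    sh m x j = x ⟨(j.val + m) % k, Nat.mod_lt _ (Nat.pos_of_ne_zero (NeZero.ne k))⟩ := rfl

lemma sh_congr {α : Type} {k : ℕ} [NeZero k] {m m' : ℕ} (h : m % k = m' % k) (x : Fin k → α) :
    sh m x = sh m' x := by
  funext j
  simp only [sh]
  congr 1
  refine Fin.ext ?_
  show (j.val + m) % k = (j.val + m') % k
  rw [Nat.add_mod, h, ← Nat.add_mod]

lemma sh_zero {α : Type} {k : ℕ} [NeZero k] (x : Fin k → α) : sh 0 x = x := by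
  funext j; simp only [sh]; congr 1; exact Fin.ext (by simp [Nat.mod_eq_of_lt j.isLt])

lemma sh_sh {α : Type} {k : ℕ} [NeZero k] (m i : ℕ) (x : Fin k → α) :
    sh i (sh m x) = sh (i + m) x := by
  funext j
  simp only [sh]
  congr 1
  refine Fin.ext ?_
  show ((j.val + i) % k + m) % k = (j.val + (i + m)) % k
  rw [Nat.mod_add_mod, Nat.add_assoc]

lemma cycShift_eq_sh {α : Type} {k : ℕ} [NeZero k] (x : Fin k → α) :
    cycShift x = sh 1 x := rfl

lemma sh_mod {α : Type} {k : ℕ} [NeZero k] (m : ℕ) (x : Fin k → α) :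
    sh (m % k) x = sh m x := sh_congr (Nat.mod_mod_of_dvd m dvd_rfl) x

/-- evaluation in the power algebra is pointwise. -/
lemma eval_pow (A : UAlgebra σ) (k : ℕ) {n : ℕ} (t : Term σ n)
    (x : Fin n → (Fin k → A.carrier)) (j : Fin k) :
    t.eval (A.pow k) x j = t.eval A (fun i => x i j) := by
  induction t with
  | var i => rfl
  | app s ts ih =>
    simp only [Term.eval]
    exact congrArg (A.op s) (funext fun l => ih l)

lemma sub_eval (A : UAlgebra σ) (k : ℕ) {R : Set (Fin k → A.carrier)}
    (hsub : Subuniverse (A.pow k) R) {n : ℕ} (t : Term σ n)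
    (x : Fin n → (Fin k → A.carrier)) (hx : ∀ i, x i ∈ R) :
    t.eval (A.pow k) x ∈ R := by
  induction t with
  | var i => exact hx i
  | app s ts ih => exact hsub s _ fun j => ih j

end CycAux

/-- A finite idempotent algebra `A` has a `k`-ary cyclic term
iff every nonempty cyclic subalgebra of `A^k` contains a constant tuple. -/
theorem cyclic_term_iff {σ : Signature} (A : UAlgebra σ) [Fintype A.carrier]
    (hI : Idempotent A) (k : ℕ) (hk : 2 ≤ k) :
    (∃ t : Term σ k, IsCyclicTerm A t) ↔
      ∀ R : Set (Fin k → A.carrier), Subuniverse (A.pow k) R →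
        (∀ f ∈ R, cycShift f ∈ R) → R.Nonempty →
          ∃ a : A.carrier, (fun _ => a) ∈ R := by
  open CycAux in
  haveI : NeZero k := ⟨by omega⟩
  have kpos : 0 < k := by omega
  have hshsucc : ∀ {α : Type} (m : ℕ) (f : Fin k → α), CycAux.sh (m + 1) f = cycShift (CycAux.sh m f) := by
    intro α m f
    rw [CycAux.cycShift_eq_sh, CycAux.sh_sh]
    exact CycAux.sh_congr (by rw [Nat.add_comm]) f
  constructor
  · rintro ⟨t, ht⟩ R hsub hcyc ⟨f, hf⟩
    have hsh : ∀ m : ℕ, CycAux.sh m f ∈ R := by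
      intro m
      induction m with
      | zero => rwa [CycAux.sh_zero]
      | succ m ih => rw [hshsucc]; exact hcyc _ ih
    have hev : ∀ m : ℕ, t.eval A (CycAux.sh m f) = t.eval A f := by
      intro m
      induction m with
      | zero => rw [CycAux.sh_zero]
      | succ m ih => rw [hshsucc, ← ht.2, ih]
    refine ⟨t.eval A f, ?_⟩
    have hmem := CycAux.sub_eval A k hsub t (fun i : Fin k => CycAux.sh i.val f)
      (fun i => hsh i.val)
    have heq : t.eval (A.pow k) (fun i : Fin k => CycAux.sh i.val f) =
        fun _ => t.eval A f := by
      funext j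
      rw [CycAux.eval_pow]
      have : (fun i : Fin k => CycAux.sh i.val f j) = CycAux.sh j.val f := by
        funext i
        rw [CycAux.sh_apply, CycAux.sh_apply]
        congr 1
        exact Fin.ext (by show _ = _; rw [Nat.add_comm])
      rw [this, hev]
    rwa [heq] at hmem
  · intro h
    classical
    -- For every tuple b, some term is constant on the orbit of b.
    have key : ∀ b : Fin k → A.carrier, ∃ t : Term σ k,
        ∀ i i' : ℕ, t.eval A (CycAux.sh i b) = t.eval A (CycAux.sh i' b) := by
      intro b
      have hmain := h {f | ∃ t : Term σ k, f = fun i : Fin k => t.eval A (CycAux.sh i.val b)}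
        ?_ ?_ ?_
      · obtain ⟨c, t, hct⟩ := hmain
        refine ⟨t, fun i i' => ?_⟩
        have hv : ∀ m : ℕ, t.eval A (CycAux.sh m b) = c := by
          intro m
          have h1 := congrFun hct ⟨m % k, Nat.mod_lt _ kpos⟩
          rw [← CycAux.sh_mod m b]
          exact h1.symm
        rw [hv i, hv i']
      · -- subuniverse
        intro s x hx
        have hx' : ∀ i, ∃ t : Term σ k,
            x i = fun j : Fin k => t.eval A (CycAux.sh j.val b) := hx
        choose ts hts using hx'
        refine ⟨Term.app s ts, ?_⟩
        funext i
        show A.op s (fun l => x l i) = A.op s fun l => (ts l).eval A (CycAux.sh i.val b)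
        congr 1
        funext l
        rw [hts l]
      · -- cyclic
        rintro f ⟨t, rfl⟩
        refine ⟨CycAux.rename (fun j : Fin k =>
          ⟨(j.val + 1) % k, Nat.mod_lt _ kpos⟩) t, ?_⟩
        funext i
        calc cycShift (fun i : Fin k => t.eval A (CycAux.sh i.val b)) i
            = t.eval A (CycAux.sh ((i.val + 1) % k) b) := rfl
          _ = t.eval A (CycAux.sh (i.val + 1) b) := by rw [CycAux.sh_mod]
          _ = t.eval A (CycAux.sh 1 (CycAux.sh i.val b)) := by
                rw [CycAux.sh_sh, Nat.add_comm]
          _ = (CycAux.rename (fun j : Fin k =>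
                ⟨(j.val + 1) % k, Nat.mod_lt _ kpos⟩) t).eval A (CycAux.sh i.val b) := by
                rw [CycAux.eval_rename]; rfl
      · exact ⟨_, Term.var ⟨0, by omega⟩, rfl⟩
    -- combine over all tuples by finite induction
    have main : ∀ S : Finset (Fin k → A.carrier), ∃ t : Term σ k,
        ∀ a ∈ S, ∀ m : ℕ, t.eval A (CycAux.sh m a) = t.eval A a := by
      intro S
      induction S using Finset.induction with
      | empty => exact ⟨Term.var ⟨0, by omega⟩, fun a ha => absurd ha (Finset.notMem_empty a)⟩
      | @insert a S ha ih =>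
        obtain ⟨t, ht⟩ := ih
        obtain ⟨t₂, h₂⟩ := key (fun i : Fin k => t.eval A (CycAux.sh i.val a))
        set b : Fin k → A.carrier := fun i : Fin k => t.eval A (CycAux.sh i.val a) with hb
        set T : Term σ k := CycAux.subst (fun i : Fin k =>
          CycAux.rename (fun j : Fin k =>
            ⟨(j.val + i.val) % k, Nat.mod_lt _ kpos⟩) t) t₂ with hT
        have hTev : ∀ (m : ℕ) (x : Fin k → A.carrier),
            T.eval A (CycAux.sh m x) =
              t₂.eval A (fun i : Fin k => t.eval A (CycAux.sh (i.val + m) x)) := by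
          intro m x
          rw [hT, CycAux.eval_subst]
          refine congrArg (Term.eval A t₂) (funext fun i => ?_)
          rw [CycAux.eval_rename]
          refine congrArg (Term.eval A t) (funext fun j => ?_)
          simp only [CycAux.sh_apply]
          congr 1
          refine Fin.ext ?_
          show ((j.val + i.val) % k + m) % k = (j.val + (i.val + m)) % k
          rw [Nat.mod_add_mod, Nat.add_assoc]
        have hT0 : ∀ y : Fin k → A.carrier,
            T.eval A y = t₂.eval A (fun i : Fin k => t.eval A (CycAux.sh i.val y)) := by
          intro y
          have h0 := hTev 0 y
          rw [CycAux.sh_zero] at h0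
          exact h0
        refine ⟨T, ?_⟩
        intro a' ha' m
        rcases Finset.mem_insert.mp ha' with hcase | hcase
        · subst hcase
          have hbm : ∀ n : ℕ, t.eval A (CycAux.sh n a') = b ⟨n % k, Nat.mod_lt _ kpos⟩ := by
            intro n
            rw [hb]
            show _ = t.eval A (CycAux.sh ((⟨n % k, Nat.mod_lt _ kpos⟩ : Fin k) : Fin k).val a')
            rw [CycAux.sh_mod]
          calc T.eval A (CycAux.sh m a')
              = t₂.eval A (fun i : Fin k => t.eval A (CycAux.sh (i.val + m) a')) := hTev m a'
            _ = t₂.eval A (CycAux.sh m b) :=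
                  congrArg (Term.eval A t₂) (funext fun i => hbm (i.val + m))
            _ = t₂.eval A (CycAux.sh 0 b) := h₂ m 0
            _ = t₂.eval A b := by rw [CycAux.sh_zero]
            _ = t₂.eval A (fun i : Fin k => t.eval A (CycAux.sh i.val a')) := rfl
            _ = T.eval A a' := (hT0 a').symm
        · calc T.eval A (CycAux.sh m a')
              = t₂.eval A (fun i : Fin k => t.eval A (CycAux.sh (i.val + m) a')) := hTev m a'
            _ = t₂.eval A (fun _ => t.eval A a') :=
                  congrArg (Term.eval A t₂) (funext fun i => ht a' hcase _)
            _ = t.eval A a' := CycAux.eval_idem hI t₂ _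
            _ = t₂.eval A (fun i : Fin k => t.eval A (CycAux.sh i.val a')) :=
                  (CycAux.eval_idem hI t₂ _).symm.trans
                    (congrArg (Term.eval A t₂) (funext fun i => (ht a' hcase i.val).symm))
            _ = T.eval A a' := (hT0 a').symm
    obtain ⟨t, ht⟩ := main Finset.univ
    refine ⟨t, fun a => CycAux.eval_idem hI t a, fun x => ?_⟩
    rw [CycAux.cycShift_eq_sh]
    exact (ht x (Finset.mem_univ x) 1).symm
end
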